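/- With TP, FP, TN, FN nonnegative and all four factors TP+FP, TP+FN, TN+FP, TN+FN positive, MCC = 1 if and only if FP = FN = 0, and MCC = −1 if and only if TP = TN = 0. -/
import Mathlib


/-- With `TP, FP, TN, FN` nonnegative and all four factors positive,
`MCC = 1 ↔ FP = FN = 0` and `MCC = −1 ↔ TP = TN = 0`. -/
theorem stmt_6 (TP FP TN FN : ℝ)
    (hTP : 0 ≤ TP) (hFP : 0 ≤ FP) (hTN : 0 ≤ TN) (hFN : 0 ≤ FN)
    (h1 : 0 < TP + FP) (h2 : 0 < TP + FN) (h3 : 0 < TN + FP) (h4 : 0 < TN + FN) :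
    ((TP * TN - FP * FN) /
        Real.sqrt ((TP + FP) * (TP + FN) * (TN + FP) * (TN + FN)) = 1
      ↔ FP = 0 ∧ FN = 0) ∧
    ((TP * TN - FP * FN) /
        Real.sqrt ((TP + FP) * (TP + FN) * (TN + FP) * (TN + FN)) = -1
      ↔ TP = 0 ∧ TN = 0) := by
  have hP : 0 < (TP + FP) * (TP + FN) * (TN + FP) * (TN + FN) := by positivity
  have hsP : 0 < Real.sqrt ((TP + FP) * (TP + FN) * (TN + FP) * (TN + FN)) :=
    Real.sqrt_pos.mpr hP
  have hsq : Real.sqrt ((TP + FP) * (TP + FN) * (TN + FP) * (TN + FN)) ^ 2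
      = (TP + FP) * (TP + FN) * (TN + FP) * (TN + FN) := Real.sq_sqrt hP.le
  constructor
  · constructor
    · intro h
      rw [div_eq_iff hsP.ne'] at h
      have hN : TP * TN - FP * FN
          = Real.sqrt ((TP + FP) * (TP + FN) * (TN + FP) * (TN + FN)) := by linarith
      have hN2 : (TP * TN - FP * FN) ^ 2
          = (TP + FP) * (TP + FN) * (TN + FP) * (TN + FN) := by rw [hN, hsq]
      have hNpos : 0 < TP * TN - FP * FN := hN ▸ hsP
      have hTPpos : 0 < TP := by nlinarith
      have hTNpos : 0 < TN := by nlinarith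
      have key : FP * (TN * FN ^ 2 + TN ^ 2 * FN + FP * TN * FN + TP * FN ^ 2
            + 4 * TP * TN * FN + TP * TN ^ 2 + TP * FP * FN + TP * FP * TN
            + TP ^ 2 * FN + TP ^ 2 * TN)
          + TP * TN * FN * (TP + TN + FN)
          = (TP + FP) * (TP + FN) * (TN + FP) * (TN + FN)
            - (TP * TN - FP * FN) ^ 2 := by ring
      rw [← hN2, sub_self] at key
      have hA : 0 < TN * FN ^ 2 + TN ^ 2 * FN + FP * TN * FN + TP * FN ^ 2
            + 4 * TP * TN * FN + TP * TN ^ 2 + TP * FP * FN + TP * FP * TN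
            + TP ^ 2 * FN + TP ^ 2 * TN := by positivity
      have hS : 0 ≤ TP * TN * FN * (TP + TN + FN) := by positivity
      have hFP0 : FP = 0 := by
        by_contra hc
        have hfp : 0 < FP := lt_of_le_of_ne hFP (Ne.symm hc)
        nlinarith [mul_pos hfp hA]
      rw [hFP0, zero_mul, zero_add] at key
      refine ⟨hFP0, ?_⟩
      by_contra hc
      have hfn : 0 < FN := lt_of_le_of_ne hFN (Ne.symm hc)
      have hpos : 0 < TP * TN * FN * (TP + TN + FN) := by positivity
      linarith
    · rintro ⟨hb, hd⟩
      subst hb; subst hd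
      have hTPpos : 0 < TP := by linarith
      have hTNpos : 0 < TN := by linarith
      have hPe : (TP + 0) * (TP + 0) * (TN + 0) * (TN + 0) = (TP * TN) ^ 2 := by ring
      rw [hPe, Real.sqrt_sq (by positivity)]
      rw [mul_zero, sub_zero, div_self (by positivity)]
  · constructor
    · intro h
      rw [div_eq_iff hsP.ne'] at h
      have hN : TP * TN - FP * FN
          = -Real.sqrt ((TP + FP) * (TP + FN) * (TN + FP) * (TN + FN)) := by linarith
      have hN2 : (TP * TN - FP * FN) ^ 2
          = (TP + FP) * (TP + FN) * (TN + FP) * (TN + FN) := by rw [hN, neg_sq, hsq]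
      have hNneg : TP * TN - FP * FN < 0 := by rw [hN]; linarith
      have hFPpos : 0 < FP := by nlinarith
      have hFNpos : 0 < FN := by nlinarith
      have key : TP * (TN * FN ^ 2 + TN ^ 2 * FN + FP * FN ^ 2 + 4 * FP * TN * FN
            + FP * TN ^ 2 + FP ^ 2 * FN + FP ^ 2 * TN + TP * TN * FN + TP * FP * FN
            + TP * FP * TN)
          + FP * TN * FN * (FP + TN + FN)
          = (TP + FP) * (TP + FN) * (TN + FP) * (TN + FN)
            - (TP * TN - FP * FN) ^ 2 := by ring
      rw [← hN2, sub_self] at key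
      have hC : 0 < TN * FN ^ 2 + TN ^ 2 * FN + FP * FN ^ 2 + 4 * FP * TN * FN
            + FP * TN ^ 2 + FP ^ 2 * FN + FP ^ 2 * TN + TP * TN * FN + TP * FP * FN
            + TP * FP * TN := by positivity
      have hS : 0 ≤ FP * TN * FN * (FP + TN + FN) := by positivity
      have hTP0 : TP = 0 := by
        by_contra hc
        have htp : 0 < TP := lt_of_le_of_ne hTP (Ne.symm hc)
        nlinarith [mul_pos htp hC]
      rw [hTP0, zero_mul, zero_add] at key
      refine ⟨hTP0, ?_⟩
      by_contra hc
      have htn : 0 < TN := lt_of_le_of_ne hTN (Ne.symm hc)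
      have hpos : 0 < FP * TN * FN * (FP + TN + FN) := by positivity
      linarith
    · rintro ⟨ha, hc⟩
      subst ha; subst hc
      have hFPpos : 0 < FP := by linarith
      have hFNpos : 0 < FN := by linarith
      have hPe : (0 + FP) * (0 + FN) * (0 + FP) * (0 + FN) = (FP * FN) ^ 2 := by ring
      rw [hPe, Real.sqrt_sq (by positivity)]
      rw [zero_mul, zero_sub, neg_div, div_self (by positivity)]
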